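/- arXiv:2603.18580 — 2 statements merged into one kernel-verified Lean document; each statement's English description precedes it below -/
import Mathlib

section
/- In a finite T0 topological space, every nested sequence of open sets (U_j) around a point satisfies |U_j| = |U_{j-1}| + 1 for each j ≥ 1; that is, each term contains exactly one more point than the previous one. -/
open Set Topology

/-- The minimal open set containing `x`: the intersection of all open sets containing `x`. -/
def minOpen (X : Type*) [TopologicalSpace X] (x : X) : Set X :=
  ⋂₀ {U : Set X | IsOpen U ∧ x ∈ U}

/-- A nested sequence of open sets around `x`: a sequence of open sets starting at the
minimal open set of `x`, increasing, strictly increasing until it reaches the whole space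
(after which it is stationary), with no open set strictly between consecutive terms. -/
def NestedSeq (X : Type*) [TopologicalSpace X] (x : X) (c : ℕ → Set X) : Prop :=
  c 0 = minOpen X x ∧ (∀ j, IsOpen (c j)) ∧
  (∀ j, c j ⊆ c (j + 1)) ∧
  (∀ j, c j ≠ c (j + 1) ∨ c j = Set.univ) ∧
  (∀ j, ∀ V : Set X, IsOpen V → c j ⊆ V → V ⊆ c (j + 1) → V = c j ∨ V = c (j + 1))

/-- The furtherness `Ψ(x,y)`: the least `k` such that `y` belongs to the `k`-th term of
some nested sequence of open sets around `x`. -/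
noncomputable def furth (X : Type*) [TopologicalSpace X] (x y : X) : ℕ :=
  sInf {k | ∃ c : ℕ → Set X, NestedSeq X x c ∧ y ∈ c k}


lemma minOpen_isOpen (X : Type*) [TopologicalSpace X] [Finite X] (y : X) :
    IsOpen (minOpen X y) := by
  apply Set.Finite.isOpen_sInter (Set.toFinite _)
  rintro U ⟨hU, -⟩; exact hU

lemma mem_minOpen (X : Type*) [TopologicalSpace X] (y : X) : y ∈ minOpen X y := by
  intro U hU; exact hU.2

lemma minOpen_subset (X : Type*) [TopologicalSpace X] {y : X} {U : Set X}
    (hU : IsOpen U) (hy : y ∈ U) : minOpen X y ⊆ U :=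
  Set.sInter_subset_of_mem ⟨hU, hy⟩

theorem stmt7 (X : Type*) [TopologicalSpace X] [Finite X] [T0Space X] (x : X)
    (c : ℕ → Set X) (hc : NestedSeq X x c) (j : ℕ) (hj : c j ≠ c (j + 1)) :
    (c (j + 1)).ncard = (c j).ncard + 1 := by
  obtain ⟨h0, hopen, hsub, hne, hbet⟩ := hc
  have hss : c j ⊂ c (j + 1) := (hsub j).ssubset_of_ne hj
  obtain ⟨w, hw1, hw0⟩ := Set.exists_of_ssubset hss
  have key : ∀ z w : X, z ∈ c (j+1) → z ∉ c j → w ∈ c (j+1) → w ∉ c j →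
      w ∉ minOpen X z → False := by
    intro z w hz1 hz0 hw1 hw0 hwz
    have hVopen : IsOpen (c j ∪ minOpen X z) := (hopen j).union (minOpen_isOpen X z)
    have hVsub : c j ∪ minOpen X z ⊆ c (j+1) :=
      Set.union_subset (hsub j) (minOpen_subset X (hopen (j+1)) hz1)
    rcases hbet j _ hVopen Set.subset_union_left hVsub with h | h
    · exact hz0 (h ▸ Or.inr (mem_minOpen X z))
    · have := h ▸ hw1
      rcases this with h' | h'
      · exact hw0 h'
      · exact hwz h'
  have huniq : ∀ z ∈ c (j+1), z ∉ c j → z = w := by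
    intro z hz1 hz0
    by_cases hwz : w ∈ minOpen X z
    · by_cases hzw : z ∈ minOpen X w
      · -- inseparable
        have h1 : minOpen X z ⊆ minOpen X w :=
          minOpen_subset X (minOpen_isOpen X w) hzw
        have h2 : minOpen X w ⊆ minOpen X z :=
          minOpen_subset X (minOpen_isOpen X z) hwz
        have : Inseparable z w := by
          rw [inseparable_iff_forall_isOpen]
          intro s hs
          constructor
          · intro h; exact minOpen_subset X hs h (h2 (mem_minOpen X w))
          · intro h; exact minOpen_subset X hs h (h1 (mem_minOpen X z))
        exact this.eq
      · exact absurd (key w z hw1 hw0 hz1 hz0 hzw) not_false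
    · exact absurd (key z w hz1 hz0 hw1 hw0 hwz) not_false
  have heq : c (j + 1) = insert w (c j) := by
    ext a
    constructor
    · intro ha
      by_cases h : a ∈ c j
      · exact Set.mem_insert_of_mem _ h
      · exact (huniq a ha h) ▸ Set.mem_insert _ _
    · rintro (rfl | h)
      · exact hw1
      · exact hsub j h
  rw [heq, Set.ncard_insert_of_notMem hw0 (Set.toFinite _)]
end

section
/- Let X be a finite topological space and x, y ∈ X. Then Ψ(x,y) = 0 if and only if Ψ(x,a) ≤ Ψ(y,a) for all a ∈ X. -/
open Set Topology

section Aux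

variable {X : Type*} [TopologicalSpace X]

lemma isOpen_minOpen [Finite X] (x : X) : IsOpen (minOpen X x) :=
  Set.Finite.isOpen_sInter (Set.toFinite _) (fun _ hU => hU.1)

lemma mem_minOpen_self (x : X) : x ∈ minOpen X x :=
  fun _ hU => hU.2

lemma minOpen_mono {x y : X} (h : y ∈ minOpen X x) : minOpen X y ⊆ minOpen X x := by
  intro z hz
  intro U hU
  exact hz U ⟨hU.1, h U hU⟩

/-- In a finite space, every proper open set has an open "cover" in the lattice of opens. -/
lemma exists_open_cover [Finite X] {U : Set X} (hU : IsOpen U) (hne : U ≠ Set.univ) :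
    ∃ V : Set X, IsOpen V ∧ U ⊆ V ∧ U ≠ V ∧
      ∀ W : Set X, IsOpen W → U ⊆ W → W ⊆ V → W = U ∨ W = V := by
  have hfin : {V : Set X | IsOpen V ∧ U ⊆ V ∧ U ≠ V}.Finite := Set.toFinite _
  have hne' : {V : Set X | IsOpen V ∧ U ⊆ V ∧ U ≠ V}.Nonempty :=
    ⟨Set.univ, isOpen_univ, Set.subset_univ _, hne⟩
  obtain ⟨V, hV, hmin⟩ := hfin.exists_minimal hne'
  refine ⟨V, hV.1, hV.2.1, hV.2.2, ?_⟩
  intro W hW hUW hWV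
  by_cases hWU : W = U
  · exact Or.inl hWU
  · exact Or.inr (le_antisymm hWV (hmin ⟨hW, hUW, fun h => hWU h.symm⟩ hWV))

open Classical in
/-- The "next" open set: a cover of `U` if `U ≠ univ`, else `univ`. -/
noncomputable def nextOpen (X : Type*) [TopologicalSpace X] [Finite X] (U : Set X) : Set X :=
  if h : IsOpen U ∧ U ≠ Set.univ then (exists_open_cover h.1 h.2).choose else Set.univ

lemma nextOpen_spec [Finite X] {U : Set X} (hU : IsOpen U) (hne : U ≠ Set.univ) :
    IsOpen (nextOpen X U) ∧ U ⊆ nextOpen X U ∧ U ≠ nextOpen X U ∧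
      ∀ W : Set X, IsOpen W → U ⊆ W → W ⊆ nextOpen X U → W = U ∨ W = nextOpen X U := by
  rw [nextOpen, dif_pos ⟨hU, hne⟩]
  exact (exists_open_cover hU hne).choose_spec

lemma nextOpen_univ [Finite X] : nextOpen X Set.univ = Set.univ := by
  rw [nextOpen, dif_neg (by simp)]

/-- There exists a nested sequence around any point of a finite space. -/
lemma exists_nestedSeq [Finite X] (x : X) : ∃ c : ℕ → Set X, NestedSeq X x c := by
  classical
  set c : ℕ → Set X := fun n => (nextOpen X)^[n] (minOpen X x) with hcdef
  have hsucc : ∀ j, c (j + 1) = nextOpen X (c j) := by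
    intro j
    simp only [hcdef, Function.iterate_succ_apply']
  have hopen : ∀ j, IsOpen (c j) := by
    intro j
    induction j with
    | zero => exact isOpen_minOpen x
    | succ m ih =>
      rw [hsucc]
      by_cases hne : c m = Set.univ
      · rw [hne, nextOpen_univ]; exact isOpen_univ
      · exact (nextOpen_spec ih hne).1
  have hkey : ∀ j, c j ⊆ c (j + 1) ∧ (c j ≠ c (j + 1) ∨ c j = Set.univ) ∧
      ∀ W : Set X, IsOpen W → c j ⊆ W → W ⊆ c (j + 1) → W = c j ∨ W = c (j + 1) := by
    intro j
    by_cases hne : c j = Set.univ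
    · rw [hsucc, hne, nextOpen_univ]
      exact ⟨subset_rfl, Or.inr rfl,
        fun W _ h1 h2 => Or.inl (le_antisymm h2 h1)⟩
    · obtain ⟨h1, h2, h3, h4⟩ := nextOpen_spec (hopen j) hne
      rw [hsucc]
      exact ⟨h2, Or.inl h3, h4⟩
  exact ⟨c, rfl, hopen, fun j => (hkey j).1, fun j => (hkey j).2.1, fun j => (hkey j).2.2⟩

lemma NestedSeq.mono' {x : X} {c : ℕ → Set X} (hc : NestedSeq X x c) :
    Monotone c := monotone_nat_of_le_succ fun j => hc.2.2.1 j

/-- Every nested sequence eventually reaches `univ`. -/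
lemma NestedSeq.reaches_univ [Finite X] {x : X} {c : ℕ → Set X} (hc : NestedSeq X x c) :
    ∃ N, c N = Set.univ := by
  by_contra h
  push_neg at h
  have hstrict : StrictMono c := by
    apply strictMono_nat_of_lt_succ
    intro n
    exact lt_of_le_of_ne (hc.2.2.1 n) ((hc.2.2.2.1 n).resolve_right (h n))
  have hinj : Function.Injective c := hstrict.injective
  obtain ⟨a, b, hne, hab⟩ := Finite.exists_ne_map_eq_of_infinite c
  exact hne (hinj hab)

lemma furth_set_nonempty [Finite X] (x y : X) :
    {k | ∃ c : ℕ → Set X, NestedSeq X x c ∧ y ∈ c k}.Nonempty := by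
  obtain ⟨c, hc⟩ := exists_nestedSeq x
  obtain ⟨N, hN⟩ := hc.reaches_univ
  exact ⟨N, c, hc, hN ▸ Set.mem_univ y⟩

lemma furth_self [Finite X] (x : X) : furth X x x = 0 := by
  obtain ⟨c, hc⟩ := exists_nestedSeq x
  have h : 0 ∈ {k | ∃ c : ℕ → Set X, NestedSeq X x c ∧ x ∈ c k} :=
    ⟨c, hc, hc.1 ▸ mem_minOpen_self x⟩
  exact Nat.eq_zero_of_le_zero (Nat.sInf_le h)

open Classical in
/-- The index-compression function: `cIdx d j` is an index of the `j`-th distinct value of `d`. -/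
noncomputable def cIdx {X : Type*} (d : ℕ → Set X) : ℕ → ℕ
  | 0 => 0
  | j + 1 =>
    if h : ∃ m, cIdx d j < m ∧ d m ≠ d (cIdx d j) then Nat.find h else cIdx d j

/-- Compression: from a weakly increasing saturated sequence of opens starting at `minOpen x`
and reaching `univ`, extract a genuine nested sequence dominating it. -/
lemma compress [Finite X] (x : X) (d : ℕ → Set X)
    (h0 : d 0 = minOpen X x)
    (hopen : ∀ j, IsOpen (d j))
    (hmono : ∀ j, d j ⊆ d (j + 1))
    (hsat : ∀ j, ∀ V : Set X, IsOpen V → d j ⊆ V → V ⊆ d (j + 1) → V = d j ∨ V = d (j + 1))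
    (huniv : ∃ N, d N = Set.univ) :
    ∃ e : ℕ → Set X, NestedSeq X x e ∧ ∀ k, d k ⊆ e k := by
  classical
  have hmono' : Monotone d := monotone_nat_of_le_succ hmono
  obtain ⟨N, hN⟩ := huniv
  -- if no next index exists, current value is univ
  have hstall : ∀ j, ¬(∃ m, cIdx d j < m ∧ d m ≠ d (cIdx d j)) → d (cIdx d j) = Set.univ := by
    intro j h
    push_neg at h
    rcases le_or_gt N (cIdx d j) with hle | hlt
    · exact Set.eq_univ_of_univ_subset (hN ▸ hmono' hle)
    · exact (h N hlt).symm ▸ hN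
  have hle : ∀ j, cIdx d j ≤ cIdx d (j + 1) := by
    intro j
    rw [cIdx]
    split
    · next h => exact le_of_lt (Nat.find_spec h).1
    · exact le_refl _
  have emono : ∀ j, d (cIdx d j) ⊆ d (cIdx d (j + 1)) := fun j => hmono' (hle j)
  -- key dichotomy for each step
  have hstep : ∀ j, (d (cIdx d j) = Set.univ ∧ cIdx d (j + 1) = cIdx d j) ∨
      (d (cIdx d (j + 1) - 1) = d (cIdx d j) ∧ cIdx d (j + 1) - 1 + 1 = cIdx d (j + 1) ∧
        d (cIdx d (j + 1)) ≠ d (cIdx d j)) := by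
    intro j
    rw [cIdx]
    split
    · next h =>
      right
      have hspec := Nat.find_spec h
      have hm1 : cIdx d j ≤ Nat.find h - 1 := by omega
      have hm2 : Nat.find h - 1 + 1 = Nat.find h := by omega
      refine ⟨?_, hm2, hspec.2⟩
      rcases eq_or_lt_of_le hm1 with heq | hlt'
      · rw [← heq]
      · have hmin := Nat.find_min h (m := Nat.find h - 1) (by omega)
        push_neg at hmin
        exact hmin hlt'
    · next h => exact Or.inl ⟨hstall j h, rfl⟩
  refine ⟨fun j => d (cIdx d j), ⟨?_, fun j => hopen _, emono, ?_, ?_⟩, ?_⟩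
  · show d (cIdx d 0) = minOpen X x
    rw [cIdx]; exact h0
  · intro j
    show d (cIdx d j) ≠ d (cIdx d (j + 1)) ∨ d (cIdx d j) = Set.univ
    rcases hstep j with ⟨h1, _⟩ | ⟨_, _, h3⟩
    · exact Or.inr h1
    · exact Or.inl (Ne.symm h3)
  · intro j V hV h1 h2
    show V = d (cIdx d j) ∨ V = d (cIdx d (j + 1))
    replace h1 : d (cIdx d j) ⊆ V := h1
    replace h2 : V ⊆ d (cIdx d (j + 1)) := h2
    rcases hstep j with ⟨_, h2'⟩ | ⟨hprev, hsucc, _⟩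
    · left
      apply le_antisymm _ h1
      calc V ⊆ d (cIdx d (j + 1)) := h2
        _ = d (cIdx d j) := by rw [h2']
    · have hres := hsat (cIdx d (j + 1) - 1) V hV (by rw [hprev]; exact h1)
        (by rw [hsucc]; exact h2)
      rcases hres with h | h
      · exact Or.inl (h.trans hprev)
      · exact Or.inr (by rw [h, hsucc])
  · -- domination: d k ⊆ d (cIdx d k)
    intro k
    show d k ⊆ d (cIdx d k)
    have key : ∀ j, j ≤ cIdx d j ∨ d (cIdx d j) = Set.univ := by
      intro j
      induction j with
      | zero => exact Or.inl (Nat.zero_le _)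
      | succ m ih =>
        rcases ih with hm | hm
        · rcases hstep m with ⟨h1, h2⟩ | ⟨_, _, h3⟩
          · right; rw [h2]; exact h1
          · left
            have hne : cIdx d (m + 1) ≠ cIdx d m := fun hh => h3 (by rw [hh])
            have := hle m
            omega
        · right; exact Set.eq_univ_of_univ_subset (hm ▸ emono m)
    rcases key k with h | h
    · exact hmono' h
    · rw [h]; exact Set.subset_univ _

/-- Monotonicity: if `minOpen y ⊆ minOpen x` then `Ψ(x,a) ≤ Ψ(y,a)`. -/
lemma furth_mono [Finite X] {x y : X} (h : minOpen X y ⊆ minOpen X x) (a : X) :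
    furth X x a ≤ furth X y a := by
  have hne := furth_set_nonempty y a
  have hmem : furth X y a ∈ {k | ∃ c : ℕ → Set X, NestedSeq X y c ∧ a ∈ c k} :=
    Nat.sInf_mem hne
  obtain ⟨c, hc, hak⟩ := hmem
  obtain ⟨hc0, hcopen, hcmono, hcstrict, hcsat⟩ := hc
  -- build d j = c j ∪ minOpen x
  set d : ℕ → Set X := fun j => c j ∪ minOpen X x with hd
  have hx0 : d 0 = minOpen X x := by
    simp only [hd, hc0]
    exact Set.union_eq_self_of_subset_left h
  have hdopen : ∀ j, IsOpen (d j) := fun j => (hcopen j).union (isOpen_minOpen x)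
  have hdmono : ∀ j, d j ⊆ d (j + 1) := fun j => Set.union_subset_union_left _ (hcmono j)
  have hdsat : ∀ j, ∀ V : Set X, IsOpen V → d j ⊆ V → V ⊆ d (j + 1) →
      V = d j ∨ V = d (j + 1) := by
    intro j V hV h1 h2
    have hWopen : IsOpen (c j ∪ (V ∩ c (j + 1))) :=
      (hcopen j).union (hV.inter (hcopen (j + 1)))
    have hW1 : c j ⊆ c j ∪ (V ∩ c (j + 1)) := Set.subset_union_left
    have hW2 : c j ∪ (V ∩ c (j + 1)) ⊆ c (j + 1) :=
      Set.union_subset (hcmono j) Set.inter_subset_right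
    rcases hcsat j _ hWopen hW1 hW2 with hW | hW
    · -- V ∩ c (j+1) ⊆ c j, so V ⊆ d j
      left
      apply le_antisymm _ h1
      intro z hz
      rcases h2 hz with hz1 | hz2
      · have hz3 : z ∈ c j ∪ (V ∩ c (j + 1)) := Or.inr ⟨hz, hz1⟩
        rw [hW] at hz3
        exact Or.inl hz3
      · exact Or.inr hz2
    · -- c (j+1) ⊆ c j ∪ V ⊆ V, so d (j+1) ⊆ V
      right
      apply le_antisymm h2
      intro z hz
      rcases hz with hz1 | hz2
      · rw [← hW] at hz1
        rcases hz1 with hz | hz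
        · exact h1 (Or.inl hz)
        · exact hz.1
      · exact h1 (Or.inr hz2)
  have hduniv : ∃ N, d N = Set.univ := by
    obtain ⟨N, hN⟩ := NestedSeq.reaches_univ
      (show NestedSeq X y c from ⟨hc0, hcopen, hcmono, hcstrict, hcsat⟩)
    exact ⟨N, by simp [hd, hN]⟩
  obtain ⟨e, he, hdom⟩ := compress x d hx0 hdopen hdmono hdsat hduniv
  apply Nat.sInf_le
  exact ⟨e, he, hdom _ (Or.inl hak)⟩

end Aux

theorem stmt15 (X : Type*) [TopologicalSpace X] [Finite X] (x y : X) :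
    furth X x y = 0 ↔ ∀ a : X, furth X x a ≤ furth X y a := by
  constructor
  · intro h0 a
    -- furth x y = 0 means y ∈ minOpen x
    have hne := furth_set_nonempty x y
    have hmem : furth X x y ∈ {k | ∃ c : ℕ → Set X, NestedSeq X x c ∧ y ∈ c k} :=
      Nat.sInf_mem hne
    rw [h0] at hmem
    obtain ⟨c, hc, hy0⟩ := hmem
    rw [hc.1] at hy0
    exact furth_mono (minOpen_mono hy0) a
  · intro h
    have hy := h y
    rw [furth_self y] at hy
    exact Nat.le_zero.mp hy
end
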